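/- arXiv:2503.10732 — 3 statements merged into one kernel-verified Lean document; each statement's English description precedes it below -/
import Mathlib

section
/- Fix a matrix D ∈ ℝ^{m×n}, a vector p ∈ ℝ^m, and parameters μ > 0 and τ > 0. A point x* ∈ ℝ^n is a global minimizer of the basis pursuit denoising objective Φ(x) = (1/2)‖Dx − p‖₂² + μ‖x‖₁ if and only if x* satisfies the fixed-point equation x* = S_{μτ}(x* − τ·Dᵀ(Dx* − p)), where Dᵀ(Dx* − p) is the gradient of f(x) = (1/2)‖Dx − p‖₂² at x*. -/
open Matrix BigOperators

/-- The shrinkage (soft-thresholding) operator with factor `lam`. -/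
noncomputable def shrink {n : ℕ} (lam : ℝ) (x : Fin n → ℝ) : Fin n → ℝ :=
  fun i => Real.sign (x i) * max (|x i| - lam) 0

lemma lim_lemma {a b ε : ℝ} (hε : 0 < ε)
    (h : ∀ t : ℝ, 0 < t → t < ε → 0 ≤ a * t + b * t ^ 2) : 0 ≤ a := by
  by_contra hlt
  push_neg at hlt
  set t := min (ε / 2) (-a / (2 * (|b| + 1))) with ht
  have hb1 : (0:ℝ) < |b| + 1 := by positivity
  have ht0 : 0 < t := lt_min (by linarith) (div_pos (by linarith) (by positivity))
  have htε : t < ε := lt_of_le_of_lt (min_le_left _ _) (by linarith)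
  have h1 := h t ht0 htε
  have h2 : b * t ^ 2 ≤ |b| * t * t := by nlinarith [le_abs_self b, sq_nonneg t]
  have h3 : |b| * t ≤ -a / 2 := by
    have hle : t ≤ -a / (2 * (|b| + 1)) := min_le_right _ _
    have := abs_nonneg b
    calc |b| * t ≤ (|b|+1) * t := by nlinarith
    _ ≤ (|b|+1) * (-a / (2 * (|b| + 1))) := by nlinarith
    _ = -a/2 := by field_simp
  nlinarith

lemma expand {m n : ℕ} (D : Matrix (Fin m) (Fin n) ℝ) (p : Fin m → ℝ)
    (x y : Fin n → ℝ) :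
    (1/2) * ∑ i, (D.mulVec y - p) i ^ 2
      = (1/2) * ∑ i, (D.mulVec x - p) i ^ 2
        + ∑ j, Dᵀ.mulVec (D.mulVec x - p) j * (y j - x j)
        + (1/2) * ∑ i, (D.mulVec (y - x)) i ^ 2 := by
  have hadj : ∑ j, Dᵀ.mulVec (D.mulVec x - p) j * (y j - x j)
      = ∑ i, (D.mulVec x - p) i * (D.mulVec (y - x)) i := by
    calc ∑ j, Dᵀ.mulVec (D.mulVec x - p) j * (y j - x j)
        = Dᵀ.mulVec (D.mulVec x - p) ⬝ᵥ (y - x) := by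
          simp [dotProduct]
      _ = (D.mulVec x - p) ⬝ᵥ D.mulVec (y - x) := by
          rw [Matrix.mulVec_transpose, ← Matrix.dotProduct_mulVec]
      _ = ∑ i, (D.mulVec x - p) i * (D.mulVec (y - x)) i := rfl
  have hdec : ∀ i, (D.mulVec y - p) i = (D.mulVec x - p) i + (D.mulVec (y - x)) i := by
    intro i
    simp [Matrix.mulVec_sub]
  rw [hadj]
  have hsum : ∑ i, (D.mulVec y - p) i ^ 2
      = ∑ i, ((D.mulVec x - p) i ^2 + 2*((D.mulVec x - p) i * (D.mulVec (y-x)) i)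
          + (D.mulVec (y-x)) i ^2) := by
    refine Finset.sum_congr rfl fun i _ => ?_
    rw [hdec i]; ring
  rw [hsum, Finset.sum_add_distrib, Finset.sum_add_distrib, ← Finset.mul_sum]
  ring

def Cond (μ x g : ℝ) : Prop :=
  (0 < x ∧ g = -μ) ∨ (x < 0 ∧ g = μ) ∨ (x = 0 ∧ |g| ≤ μ)

lemma fp_iff {μ τ : ℝ} (hμ : 0 < μ) (hτ : 0 < τ) (x g : ℝ) :
    x = Real.sign (x - τ * g) * max (|x - τ * g| - μ * τ) 0 ↔ Cond μ x g := by
  set u := x - τ * g with hu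
  have hlam : 0 < μ * τ := mul_pos hμ hτ
  constructor
  · intro h
    rcases lt_trichotomy x 0 with hx | hx | hx
    · -- x < 0 : show u < 0 and x = u + μτ
      have hmax : 0 ≤ max (|u| - μ * τ) 0 := le_max_right _ _
      have hsneg : Real.sign u < 0 := by
        rcases lt_trichotomy u 0 with h1 | h1 | h1
        · rw [Real.sign_of_neg h1]; norm_num
        · exfalso; rw [h1] at h; simp [Real.sign_zero] at h; linarith
        · exfalso
          have := Real.sign_of_pos h1
          rw [this, one_mul] at h; linarith
      have hun : u < 0 := by
        by_contra hc
        push_neg at hc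
        rcases eq_or_lt_of_le hc with h1 | h1
        · rw [← h1, Real.sign_zero] at hsneg; linarith
        · rw [Real.sign_of_pos h1] at hsneg; linarith
      rw [Real.sign_of_neg hun] at h
      have habs : |u| = -u := abs_of_neg hun
      rw [habs] at h
      have hval : -u - μ * τ = -x := by
        rcases max_choice (-u - μ * τ) 0 with h1 | h1 <;> rw [h1] at h <;> linarith
      right; left
      refine ⟨hx, ?_⟩
      rw [hu] at hval
      have hτg : τ * g = τ * μ := by linarith
      exact mul_left_cancel₀ (ne_of_gt hτ) hτg
    · -- x = 0
      right; right
      refine ⟨hx, ?_⟩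
      by_contra hc
      push_neg at hc
      have huabs : |u| = τ * |g| := by rw [hu, hx]; simp [abs_mul, abs_of_pos hτ]
      have h2 : μ * τ < |u| := by
        rw [huabs]; nlinarith
      have hune : u ≠ 0 := by
        intro h0; rw [h0, abs_zero] at h2; linarith
      have hmax : max (|u| - μ * τ) 0 = |u| - μ * τ := max_eq_left (by linarith)
      rw [hmax, hx] at h
      rcases lt_or_gt_of_ne hune with h1 | h1
      · rw [Real.sign_of_neg h1] at h; nlinarith [h.symm]
      · rw [Real.sign_of_pos h1] at h; nlinarith [h.symm]
    · -- x > 0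
      have hspos : 0 < Real.sign u := by
        rcases lt_trichotomy u 0 with h1 | h1 | h1
        · exfalso; rw [Real.sign_of_neg h1] at h
          have : 0 ≤ max (|u| - μ * τ) 0 := le_max_right _ _
          linarith
        · exfalso; rw [h1] at h; simp [Real.sign_zero] at h; linarith
        · rw [Real.sign_of_pos h1]; norm_num
      have hupos : 0 < u := by
        by_contra hc
        push_neg at hc
        rcases eq_or_lt_of_le hc with h1 | h1
        · rw [h1, Real.sign_zero] at hspos; linarith
        · rw [Real.sign_of_neg h1] at hspos; linarith
      rw [Real.sign_of_pos hupos, one_mul, abs_of_pos hupos] at h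
      have hmx : max (u - μ * τ) 0 = x := h.symm
      have : u - μ * τ = x := by
        rcases max_choice (u - μ * τ) 0 with h1 | h1 <;> rw [h1] at hmx <;> linarith
      left
      refine ⟨hx, ?_⟩
      rw [hu] at this
      have : τ * g = -(μ * τ) := by linarith
      nlinarith
  · intro h
    rcases h with ⟨hx, hg⟩ | ⟨hx, hg⟩ | ⟨hx, hg⟩
    · have hupos : 0 < u := by rw [hu, hg]; nlinarith
      have huval : u = x + μ * τ := by rw [hu, hg]; ring
      rw [Real.sign_of_pos hupos, one_mul, abs_of_pos hupos, huval]
      rw [max_eq_left (by linarith)]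
      ring
    · have huneg : u < 0 := by rw [hu, hg]; nlinarith
      have huval : u = x - μ * τ := by rw [hu, hg]; ring
      rw [Real.sign_of_neg huneg, abs_of_neg huneg, huval]
      rw [max_eq_left (by linarith)]
      ring
    · have huabs : |u| = τ * |g| := by
        rw [hu, hx]; simp [abs_mul, abs_of_pos hτ]
      have : |u| - μ * τ ≤ 0 := by rw [huabs]; nlinarith
      rw [max_eq_right this, mul_zero, hx]

lemma term_nonneg {μ : ℝ} (hμ : 0 < μ) {x g : ℝ} (hc : Cond μ x g) (y : ℝ) :
    0 ≤ g * (y - x) + μ * |y| - μ * |x| := by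
  rcases hc with ⟨hx, hg⟩ | ⟨hx, hg⟩ | ⟨hx, hg⟩
  · rw [hg, abs_of_pos hx]; nlinarith [le_abs_self y, abs_nonneg y]
  · rw [hg, abs_of_neg hx]; nlinarith [neg_abs_le y, abs_nonneg y]
  · rw [hx, abs_zero]
    have h1 : -(|g| * |y|) ≤ g * y := by
      rw [← abs_mul]; exact neg_abs_le _
    nlinarith [abs_nonneg y]

/-- `x*` is a global minimizer of the basis pursuit denoising objective
`Φ(x) = (1/2)‖Dx − p‖₂² + μ‖x‖₁` iff it satisfies the shrinkage fixed-point equation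
`x* = S_{μτ}(x* − τ Dᵀ(Dx* − p))`. -/
theorem bpdn_minimizer_iff_shrinkage_fixed_point {m n : ℕ}
    (D : Matrix (Fin m) (Fin n) ℝ) (p : Fin m → ℝ)
    (μ τ : ℝ) (hμ : 0 < μ) (hτ : 0 < τ) (xstar : Fin n → ℝ) :
    (∀ y : Fin n → ℝ,
        (1 / 2) * ∑ i, (D.mulVec xstar - p) i ^ 2 + μ * ∑ j, |xstar j| ≤
          (1 / 2) * ∑ i, (D.mulVec y - p) i ^ 2 + μ * ∑ j, |y j|) ↔
      xstar = shrink (μ * τ) (xstar - τ • Dᵀ.mulVec (D.mulVec xstar - p)) := by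
  set g := Dᵀ.mulVec (D.mulVec xstar - p) with hg
  have heq : (xstar = shrink (μ * τ) (xstar - τ • g)) ↔ ∀ i, Cond μ (xstar i) (g i) := by
    rw [funext_iff]
    apply forall_congr'
    intro i
    have hcoord : (xstar - τ • g) i = xstar i - τ * g i := by
      simp [Pi.sub_apply, Pi.smul_apply, smul_eq_mul]
    show xstar i = Real.sign ((xstar - τ • g) i) * max (|(xstar - τ • g) i| - μ * τ) 0 ↔ _
    rw [hcoord]
    exact fp_iff hμ hτ _ _
  rw [heq]
  constructor
  · -- minimizer → Cond
    intro hmin i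
    set C := ∑ k, (D k i) ^ 2 with hC
    have hC0 : 0 ≤ C := Finset.sum_nonneg fun k _ => sq_nonneg _
    have hkey : ∀ t : ℝ,
        0 ≤ g i * t + (C / 2) * t ^ 2 + μ * (|xstar i + t| - |xstar i|) := by
      intro t
      set y := Function.update xstar i (xstar i + t) with hy
      have hdiff : ∀ j, y j - xstar j = if j = i then t else 0 := by
        intro j
        by_cases hj : j = i
        · subst hj; simp [hy]
        · simp [hy, Function.update_of_ne hj, hj]
      have hgsum : ∑ j, g j * (y j - xstar j) = g i * t := by
        rw [Finset.sum_eq_single i]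
        · rw [hdiff i]; simp
        · intro j _ hj; rw [hdiff j]; simp [hj]
        · intro h; exact absurd (Finset.mem_univ i) h
      have hmv : ∀ k, D.mulVec (y - xstar) k = D k i * t := by
        intro k
        have : (y - xstar) = fun j => if j = i then t else 0 := funext hdiff
        rw [this]
        simp [Matrix.mulVec, dotProduct, mul_ite]
      have hq : (1/2) * ∑ k, (D.mulVec (y - xstar)) k ^ 2 = (C / 2) * t ^ 2 := by
        have : ∑ k, (D.mulVec (y - xstar)) k ^ 2 = ∑ k, (D k i) ^ 2 * t ^ 2 := by
          refine Finset.sum_congr rfl fun k _ => ?_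
          rw [hmv k]; ring
        rw [this, ← Finset.sum_mul, ← hC]; ring
      have habs : ∑ j, |y j| = ∑ j, |xstar j| + (|xstar i + t| - |xstar i|) := by
        have h1 : ∑ j, (|y j| - |xstar j|) = |xstar i + t| - |xstar i| := by
          rw [Finset.sum_eq_single i]
          · simp [hy]
          · intro j _ hj; simp [hy, Function.update_of_ne hj]
          · intro h; exact absurd (Finset.mem_univ i) h
        rw [Finset.sum_sub_distrib] at h1
        linarith
      have hμy : μ * ∑ j, |y j| =
          μ * ∑ j, |xstar j| + μ * (|xstar i + t| - |xstar i|) := by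
        rw [habs, mul_add]
      have h2 := hmin y
      rw [expand D p xstar y, ← hg, hgsum, hq, hμy] at h2
      linarith
    rcases lt_trichotomy (xstar i) 0 with hx | hx | hx
    · right; left
      refine ⟨hx, ?_⟩
      have h1 : 0 ≤ g i - μ := by
        apply lim_lemma (b := C / 2) (ε := -xstar i) (by linarith)
        intro t ht0 htε
        have hk := hkey t
        have : |xstar i + t| = -(xstar i + t) := abs_of_neg (by linarith)
        rw [this, abs_of_neg hx] at hk
        nlinarith
      have h2 : 0 ≤ μ - g i := by
        apply lim_lemma (b := C / 2) (ε := 1) one_pos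
        intro t ht0 htε
        have hk := hkey (-t)
        have : |xstar i + -t| = -(xstar i + -t) := abs_of_neg (by linarith)
        rw [this, abs_of_neg hx] at hk
        nlinarith
      linarith
    · right; right
      refine ⟨hx, ?_⟩
      rw [abs_le]
      constructor
      · have h1 : 0 ≤ g i + μ := by
          apply lim_lemma (b := C / 2) (ε := 1) one_pos
          intro t ht0 htε
          have hk := hkey t
          rw [hx] at hk
          simp only [zero_add, abs_zero] at hk
          rw [abs_of_pos ht0] at hk
          nlinarith
        linarith
      · have h2 : 0 ≤ μ - g i := by
          apply lim_lemma (b := C / 2) (ε := 1) one_pos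
          intro t ht0 htε
          have hk := hkey (-t)
          rw [hx] at hk
          simp only [zero_add, abs_zero, abs_neg] at hk
          rw [abs_of_pos ht0] at hk
          nlinarith
        linarith
    · left
      refine ⟨hx, ?_⟩
      have h1 : 0 ≤ g i + μ := by
        apply lim_lemma (b := C / 2) (ε := 1) one_pos
        intro t ht0 htε
        have hk := hkey t
        have : |xstar i + t| = xstar i + t := abs_of_pos (by linarith)
        rw [this, abs_of_pos hx] at hk
        nlinarith
      have h2 : 0 ≤ -(g i + μ) := by
        apply lim_lemma (b := C / 2) (ε := xstar i) hx
        intro t ht0 htε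
        have hk := hkey (-t)
        have : |xstar i + -t| = xstar i + -t := abs_of_pos (by linarith)
        rw [this, abs_of_pos hx] at hk
        nlinarith
      linarith
  · -- Cond → minimizer
    intro hc y
    rw [expand D p xstar y, ← hg]
    have hsum : 0 ≤ ∑ i, (g i * (y i - xstar i) + μ * |y i| - μ * |xstar i|) :=
      Finset.sum_nonneg fun i _ => term_nonneg hμ (hc i) (y i)
    have hsplit : ∑ i, (g i * (y i - xstar i) + μ * |y i| - μ * |xstar i|)
        = ∑ i, g i * (y i - xstar i) + μ * ∑ i, |y i| - μ * ∑ i, |xstar i| := by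
      rw [Finset.sum_sub_distrib, Finset.sum_add_distrib, Finset.mul_sum, Finset.mul_sum]
    have hquad : 0 ≤ (1/2) * ∑ k, (D.mulVec (y - xstar)) k ^ 2 := by
      positivity
    rw [hsplit] at hsum
    linarith
end

section
/- Fix D ∈ ℝ^{m×n}, p ∈ ℝ^m, μ > 0, τ > 0, and a point x ∈ ℝ^n. Define the direction d = S_{μτ}(x − τ·Dᵀ(Dx − p)) − x. If d ≠ 0, then d is a descent direction for the basis pursuit denoising objective Φ(x) = (1/2)‖Dx − p‖₂² + μ‖x‖₁ at x: there exists ᾱ > 0 such that for every step size α with 0 < α < ᾱ one has Φ(x + α·d) < Φ(x). -/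
open Matrix BigOperators

lemma prox_pt (lam y u : ℝ) (hlam : 0 ≤ lam) :
    (1/2) * (Real.sign y * max (|y| - lam) 0 - y)^2
      + lam * |Real.sign y * max (|y| - lam) 0|
    ≤ (1/2) * (u - y)^2 + lam * |u| := by
  rcases lt_trichotomy y 0 with hy | hy | hy
  · rw [Real.sign_of_neg hy, abs_of_neg hy]
    rcases le_or_gt (-y) lam with h | h
    · rw [max_eq_right (by linarith)]
      simp only [mul_zero, neg_mul, one_mul, zero_sub, abs_zero]
      nlinarith [mul_le_mul_of_nonneg_right (neg_abs_le u) (neg_pos.2 hy).le,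
        mul_le_mul_of_nonneg_left h (abs_nonneg u), sq_nonneg u]
    · rw [max_eq_left (by linarith)]
      have hs : (-1 : ℝ) * (-y - lam) = y + lam := by ring
      rw [hs, abs_of_nonpos (by linarith)]
      nlinarith [sq_nonneg (u - (y + lam)), mul_nonneg hlam (sub_nonneg.2 (neg_abs_le u))]
  · simp [hy]
    positivity
  · rw [Real.sign_of_pos hy, abs_of_pos hy, one_mul]
    rcases le_or_gt y lam with h | h
    · rw [max_eq_right (by linarith)]
      simp only [zero_sub, abs_zero, mul_zero]
      nlinarith [mul_le_mul_of_nonneg_right (le_abs_self u) hy.le,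
        mul_le_mul_of_nonneg_left h (abs_nonneg u), sq_nonneg u]
    · rw [max_eq_left (by linarith), abs_of_nonneg (by linarith)]
      nlinarith [sq_nonneg (u - (y - lam)), mul_nonneg hlam (sub_nonneg.2 (le_abs_self u))]

/-- If `d = S_{μτ}(x − τ Dᵀ(Dx − p)) − x` is nonzero, then `d` is a descent direction for
the basis pursuit denoising objective `Φ(x) = (1/2)‖Dx − p‖₂² + μ‖x‖₁` at `x`. -/
theorem shrinkage_direction_is_descent {m n : ℕ}
    (D : Matrix (Fin m) (Fin n) ℝ) (p : Fin m → ℝ)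
    (μ τ : ℝ) (hμ : 0 < μ) (hτ : 0 < τ) (x d : Fin n → ℝ)
    (hd : d = shrink (μ * τ) (x - τ • Dᵀ.mulVec (D.mulVec x - p)) - x)
    (hne : d ≠ 0) :
    ∃ αbar > 0, ∀ α : ℝ, 0 < α → α < αbar →
      (1 / 2) * ∑ i, (D.mulVec (x + α • d) - p) i ^ 2 + μ * ∑ j, |(x + α • d) j| <
        (1 / 2) * ∑ i, (D.mulVec x - p) i ^ 2 + μ * ∑ j, |x j| := by
  set r : Fin m → ℝ := D.mulVec x - p with hr
  set g : Fin n → ℝ := Dᵀ.mulVec r with hg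
  set y : Fin n → ℝ := x - τ • g with hy
  set z : Fin n → ℝ := shrink (μ * τ) y with hzdef
  have hdz : ∀ j, d j = z j - x j := by
    intro j; simp only [hd, Pi.sub_apply]
  have hyj : ∀ j, y j = x j - τ * g j := by
    intro j; simp [hy]
  set Dd : Fin m → ℝ := D.mulVec d with hDd
  set A : ℝ := ∑ i, r i ^ 2 with hA
  set B : ℝ := ∑ i, r i * Dd i with hB
  set C : ℝ := ∑ i, Dd i ^ 2 with hC
  set N : ℝ := ∑ j, d j ^ 2 with hN
  set X : ℝ := ∑ j, |x j| with hX
  set Z : ℝ := ∑ j, |z j| with hZ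
  -- adjoint identity: ∑ g j * d j = B
  have hadj : ∑ j, g j * d j = B := by
    have h1 : g ⬝ᵥ d = r ⬝ᵥ Dd := by
      rw [hg, hDd, Matrix.mulVec_transpose, Matrix.dotProduct_mulVec]
    simpa [dotProduct] using h1
  -- prox inequality summed
  have hprox : B + μ * Z - μ * X ≤ -(N / (2 * τ)) := by
    have key : ∀ j : Fin n, (1/2) * d j ^ 2 + τ * (g j * d j) + μ * τ * |z j|
        ≤ μ * τ * |x j| := by
      intro j
      have h := prox_pt (μ * τ) (y j) (x j) (by positivity)
      have hzj : z j = Real.sign (y j) * max (|y j| - μ * τ) 0 := by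
        rw [hzdef]; rfl
      rw [← hzj] at h
      have h2 : z j - y j = d j + τ * g j := by
        rw [hdz j, hyj j]; ring
      have h3 : x j - y j = τ * g j := by rw [hyj j]; ring
      rw [h2, h3] at h
      nlinarith [h]
    have hsum := Finset.sum_le_sum (fun j (_ : j ∈ Finset.univ) => key j)
    have hL : ∑ j, ((1/2) * d j ^ 2 + τ * (g j * d j) + μ * τ * |z j|)
        = (1/2) * N + τ * B + μ * τ * Z := by
      rw [hN, hZ, ← hadj, Finset.mul_sum, Finset.mul_sum, Finset.mul_sum,
        ← Finset.sum_add_distrib, ← Finset.sum_add_distrib]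
    have hR : ∑ j, μ * τ * |x j| = μ * τ * X := by rw [hX, Finset.mul_sum]
    rw [hL, hR] at hsum
    have h2τ : (0:ℝ) < 2 * τ := by linarith
    rw [← neg_div, le_div_iff₀ h2τ]
    nlinarith [hsum]
  -- quadratic expansion
  have hquad : ∀ α : ℝ, ∑ i, (D.mulVec (x + α • d) - p) i ^ 2 = A + 2 * α * B + α ^ 2 * C := by
    intro α
    have hpt : ∀ i, (D.mulVec (x + α • d) - p) i = r i + α * Dd i := by
      intro i
      simp [Matrix.mulVec_add, Matrix.mulVec_smul, hr, hDd]
      ring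
    calc ∑ i, (D.mulVec (x + α • d) - p) i ^ 2
        = ∑ i, (r i ^ 2 + 2 * α * (r i * Dd i) + α ^ 2 * Dd i ^ 2) := by
          refine Finset.sum_congr rfl fun i _ => ?_
          rw [hpt i]; ring
      _ = A + 2 * α * B + α ^ 2 * C := by
          rw [hA, hB, hC, Finset.mul_sum, Finset.mul_sum,
            ← Finset.sum_add_distrib, ← Finset.sum_add_distrib]
  -- ℓ1 bound
  have hl1 : ∀ α : ℝ, 0 ≤ α → α ≤ 1 → ∑ j, |(x + α • d) j| ≤ (1 - α) * X + α * Z := by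
    intro α hα0 hα1
    have hpt : ∀ j : Fin n, |(x + α • d) j| ≤ (1 - α) * |x j| + α * |z j| := by
      intro j
      have : (x + α • d) j = (1 - α) * x j + α * z j := by
        simp [hdz j]; ring
      rw [this]
      calc |(1 - α) * x j + α * z j| ≤ |(1 - α) * x j| + |α * z j| := abs_add_le _ _
        _ = (1 - α) * |x j| + α * |z j| := by
            rw [abs_mul, abs_mul, abs_of_nonneg (by linarith), abs_of_nonneg hα0]
    calc ∑ j, |(x + α • d) j| ≤ ∑ j, ((1 - α) * |x j| + α * |z j|) :=
          Finset.sum_le_sum fun j _ => hpt j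
      _ = (1 - α) * X + α * Z := by
          rw [hX, hZ, Finset.mul_sum, Finset.mul_sum, ← Finset.sum_add_distrib]
  -- positivity of N, nonnegativity of C
  have hNpos : 0 < N := by
    obtain ⟨j, hj⟩ := Function.ne_iff.mp hne
    exact Finset.sum_pos' (fun i _ => sq_nonneg _)
      ⟨j, Finset.mem_univ j, lt_of_le_of_ne (sq_nonneg _) (Ne.symm (pow_ne_zero 2 hj))⟩
  have hCnn : 0 ≤ C := Finset.sum_nonneg fun i _ => sq_nonneg _
  refine ⟨min 1 (N / (τ * (C + 1))), lt_min one_pos (by positivity), ?_⟩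
  intro α hα0 hαlt
  have hα1 : α ≤ 1 := le_of_lt (lt_of_lt_of_le hαlt (min_le_left _ _))
  have hαN : α * (C + 1) < N / τ := by
    have h1 := lt_of_lt_of_le hαlt (min_le_right _ _)
    rw [lt_div_iff₀ (by positivity)] at h1
    rw [lt_div_iff₀ hτ]
    nlinarith [h1]
  have hαC : α ^ 2 * C < α * (N / τ) := by nlinarith
  rw [hquad α]
  have hl := hl1 α hα0.le hα1
  have hmul := mul_le_mul_of_nonneg_left hl hμ.le
  have hp := mul_le_mul_of_nonneg_left hprox hα0.le
  have hNτ : α * (N / (2 * τ)) = α * (N / τ) / 2 := by ring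
  linarith [hmul, hp, hαC]
end

section
/- Let A ∈ ℝ^{n×n} be symmetric positive semidefinite with columns a₁,…,a_n, let B ∈ ℝ^{m×n} have columns b₁,…,b_n, let D ∈ ℝ^{m×n} have columns d₁,…,d_n, and define F(D) = (1/2)Tr(DᵀD A) − Tr(Dᵀ B). Fix an index j with A_{jj} > 0 and set u = d_j + (1/A_{jj})(b_j − D a_j) ∈ ℝ^m. Then the vector d* = u / max(‖u‖₂, 1) is the unique minimizer, over the closed unit ball {d ∈ ℝ^m : ‖d‖₂ ≤ 1}, of the function d ↦ F(D(d)), where D(d) denotes the matrix obtained from D by replacing its j-th column with d while keeping all other columns fixed. -/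
/-!
Replacing the `j`-th column of `D` by `d` changes `F` by a quadratic in `d` whose leading
coefficient is `A_{jj} / 2`; completing the square with `u` gives
`F(D(d)) = c + (A_{jj} / 2) ‖d - u‖²` for a constant `c`. So the column update is the
nearest-point projection of `u` onto the unit ball, which is `u / max(‖u‖, 1)`: it satisfies the
variational inequality `⟪u - p, d - p⟫ ≤ 0` on the ball, and this makes it the unique minimizer.
-/

open Matrix

section Trace

variable {R : Type*} [CommRing R] {m n : Type*} [Fintype m] [Fintype n]

theorem trace_transpose_mul_mul_comm_of_isSymm {A : Matrix n n R} (hA : A.IsSymm)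
    (E N : Matrix m n R) : (Nᵀ * E * A).trace = (Eᵀ * N * A).trace := by
  rw [← trace_transpose, transpose_mul, transpose_mul, transpose_transpose, hA.eq,
    Matrix.mul_assoc, trace_mul_comm, Matrix.mul_assoc]

theorem trace_transpose_add_mul_add_mul {A : Matrix n n R} (hA : A.IsSymm)
    (E N : Matrix m n R) :
    ((E + N)ᵀ * (E + N) * A).trace
      = (Eᵀ * E * A).trace + 2 * (Eᵀ * N * A).trace + (Nᵀ * N * A).trace := by
  simp only [transpose_add, Matrix.add_mul, Matrix.mul_add, trace_add,
    trace_transpose_mul_mul_comm_of_isSymm hA E N]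
  ring

variable [DecidableEq n] (j : n) (v : m → R)

theorem trace_transpose_mul_updateCol_zero_mul (E : Matrix m n R) (A : Matrix n n R) :
    (Eᵀ * (0 : Matrix m n R).updateCol j v * A).trace = v ⬝ᵥ (E *ᵥ A j) := by
  simp only [trace, diag_apply, mul_apply, transpose_apply, updateCol_apply, Matrix.zero_apply,
    mul_ite, mul_zero, Finset.sum_ite_irrel, Finset.sum_const_zero, ite_mul, Finset.sum_mul,
    zero_mul, Finset.sum_ite_eq', Finset.mem_univ, ↓reduceIte, dotProduct, mulVec,
    Finset.mul_sum]
  rw [Finset.sum_comm]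
  simp only [mul_comm, mul_left_comm]

theorem trace_transpose_updateCol_zero_mul (B : Matrix m n R) :
    (((0 : Matrix m n R).updateCol j v)ᵀ * B).trace = v ⬝ᵥ fun i => B i j := by
  simp [trace, mul_apply, updateCol_apply, dotProduct]

theorem trace_transpose_updateCol_zero_mul_self_mul (A : Matrix n n R) :
    (((0 : Matrix m n R).updateCol j v)ᵀ * (0 : Matrix m n R).updateCol j v * A).trace
      = (v ⬝ᵥ v) * A j j := by
  simp [trace, mul_apply, updateCol_apply, dotProduct, Finset.sum_mul]

end Trace

theorem Matrix.updateCol_eq_add_updateCol_zero {R m n : Type*} [AddCommGroup R] [DecidableEq n]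
    (D : Matrix m n R) (j : n) (d : m → R) :
    D.updateCol j d = D + (0 : Matrix m n R).updateCol j (d - fun i => D i j) := by
  ext i k
  by_cases h : k = j <;> simp [h]

theorem exists_objective_updateCol_eq_const_add_sq {m n : Type*} [Fintype m] [Fintype n]
    [DecidableEq n] {A : Matrix n n ℝ} (hA : A.IsSymm) {j : n} (B D : Matrix m n ℝ)
    {u : m → ℝ} (hu : A j j • (u - fun i => D i j) = (fun i => B i j) - D *ᵥ A j) :
    ∃ c : ℝ, ∀ d : m → ℝ,
      1 / 2 * ((D.updateCol j d)ᵀ * D.updateCol j d * A).trace - ((D.updateCol j d)ᵀ * B).trace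
        = c + A j j / 2 * ((d - u) ⬝ᵥ (d - u)) := by
  set c : m → ℝ := u - fun i => D i j
  refine ⟨1 / 2 * (Dᵀ * D * A).trace - (Dᵀ * B).trace - A j j / 2 * (c ⬝ᵥ c), fun d => ?_⟩
  have hdu : d - u = (d - fun i => D i j) - c := by simp [c]
  have hDa : D *ᵥ A j = (fun i => B i j) - A j j • c := by rw [hu, sub_sub_cancel]
  rw [D.updateCol_eq_add_updateCol_zero, trace_transpose_add_mul_add_mul hA, transpose_add,
    Matrix.add_mul, trace_add, trace_transpose_mul_updateCol_zero_mul,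
    trace_transpose_updateCol_zero_mul, trace_transpose_updateCol_zero_mul_self_mul, hdu, hDa]
  generalize d - (fun i => D i j) = w
  simp only [dotProduct_sub, sub_dotProduct, dotProduct_smul, smul_eq_mul, dotProduct_comm c w]
  ring

section UnitBall

open scoped InnerProductSpace

variable {E : Type*} [NormedAddCommGroup E] [InnerProductSpace ℝ E]

noncomputable def unitBallProj (u : E) : E := (max ‖u‖ 1)⁻¹ • u

theorem norm_unitBallProj_le (u : E) : ‖unitBallProj u‖ ≤ 1 := by
  rw [unitBallProj, norm_smul, norm_inv, Real.norm_of_nonneg (by positivity)]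
  exact inv_mul_le_one_of_le₀ (le_max_left _ _) (by positivity)

theorem real_inner_sub_unitBallProj_le_zero (u : E) {d : E} (hd : ‖d‖ ≤ 1) :
    ⟪u - unitBallProj u, d - unitBallProj u⟫_ℝ ≤ 0 := by
  rcases le_or_gt ‖u‖ 1 with hu | hu
  · simp [unitBallProj, max_eq_right hu]
  · have hproj : unitBallProj u = ‖u‖⁻¹ • u := by rw [unitBallProj, max_eq_left hu.le]
    have hres : u - unitBallProj u = (1 - ‖u‖⁻¹) • u := by rw [hproj, sub_smul, one_smul]
    rw [hres, real_inner_smul_left, hproj, inner_sub_right, real_inner_smul_right,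
      real_inner_self_eq_norm_sq]
    have hcs : ⟪u, d⟫_ℝ ≤ ‖u‖ := (real_inner_le_norm u d).trans (by nlinarith)
    have hnorm : ‖u‖⁻¹ * ‖u‖ ^ 2 = ‖u‖ := by field_simp
    have hinv : ‖u‖⁻¹ ≤ 1 := inv_le_one_of_one_le₀ hu.le
    nlinarith

theorem norm_unitBallProj_sub_lt (u : E) {d : E} (hd : ‖d‖ ≤ 1) (hne : d ≠ unitBallProj u) :
    ‖unitBallProj u - u‖ < ‖d - u‖ := by
  have hsq := norm_sub_sq_real (d - unitBallProj u) (u - unitBallProj u)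
  rw [sub_sub_sub_cancel_right, real_inner_comm] at hsq
  have hvar := real_inner_sub_unitBallProj_le_zero u hd
  have hpos : 0 < ‖d - unitBallProj u‖ := norm_pos_iff.mpr (sub_ne_zero.mpr hne)
  rw [norm_sub_rev]
  refine lt_of_pow_lt_pow_left₀ 2 (norm_nonneg _) ?_
  nlinarith

end UnitBall

theorem EuclideanSpace.dotProduct_self_eq_norm_toLp_sq {ι : Type*} [Fintype ι] (v : ι → ℝ) :
    v ⬝ᵥ v = ‖WithLp.toLp 2 v‖ ^ 2 := by
  rw [← real_inner_self_eq_norm_sq, EuclideanSpace.inner_toLp_toLp, star_trivial]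

theorem EuclideanSpace.sqrt_sum_sq_eq_norm_toLp {ι : Type*} [Fintype ι] (v : ι → ℝ) :
    √(∑ i, v i ^ 2) = ‖WithLp.toLp 2 v‖ := by
  simp [EuclideanSpace.norm_eq]

/-- Block coordinate (single-column) update of the dictionary-updating stage: for a
symmetric positive semidefinite `A` with `A_{jj} > 0`, with
`u = d_j + (1/A_{jj})(b_j − D a_j)`, the vector `d* = u / max(‖u‖₂, 1)` is the unique
minimizer, over the closed Euclidean unit ball, of `d ↦ F(D(d))` where `D(d)` replaces
the `j`-th column of `D` by `d` and `F(D) = (1/2)Tr(DᵀD A) − Tr(Dᵀ B)`. -/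
theorem column_update_unique_minimizer {m n : ℕ}
    (A : Matrix (Fin n) (Fin n) ℝ) (hA : A.PosSemidef)
    (B D : Matrix (Fin m) (Fin n) ℝ)
    (F : Matrix (Fin m) (Fin n) ℝ → ℝ)
    (hF : ∀ E : Matrix (Fin m) (Fin n) ℝ,
      F E = (1 / 2) * (Eᵀ * E * A).trace - (Eᵀ * B).trace)
    (j : Fin n) (hj : 0 < A j j)
    (u : Fin m → ℝ)
    (hu : u = (fun i => D i j)
      + (1 / A j j) • ((fun i => B i j) - D.mulVec fun l => A l j))
    (dstar : Fin m → ℝ)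
    (hdstar : dstar = (max (Real.sqrt (∑ i, u i ^ 2)) 1)⁻¹ • u) :
    Real.sqrt (∑ i, dstar i ^ 2) ≤ 1 ∧
      ∀ d : Fin m → ℝ, Real.sqrt (∑ i, d i ^ 2) ≤ 1 → d ≠ dstar →
        F (D.updateCol j dstar) < F (D.updateCol j d) := by
  have hsymm : A.IsSymm := isHermitian_iff_isSymm.mp hA.isHermitian
  have hcol : A j j • (u - fun i => D i j) = (fun i => B i j) - D *ᵥ A j := by
    rw [hu, add_sub_cancel_left, smul_smul, mul_one_div_cancel hj.ne', one_smul,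
      funext (hsymm.apply j)]
  obtain ⟨c, hc⟩ := exists_objective_updateCol_eq_const_add_sq hsymm B D hcol
  have hFd (d : Fin m → ℝ) :
      F (D.updateCol j d) = c + A j j / 2 * ‖WithLp.toLp 2 d - WithLp.toLp 2 u‖ ^ 2 := by
    rw [hF, hc, EuclideanSpace.dotProduct_self_eq_norm_toLp_sq, WithLp.toLp_sub]
  have hproj : WithLp.toLp 2 dstar = unitBallProj (WithLp.toLp 2 u) := by
    rw [hdstar, unitBallProj, ← EuclideanSpace.sqrt_sum_sq_eq_norm_toLp, WithLp.toLp_smul]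
  simp only [EuclideanSpace.sqrt_sum_sq_eq_norm_toLp, hFd, hproj]
  refine ⟨norm_unitBallProj_le _, fun d hd hne => ?_⟩
  have hne' : WithLp.toLp 2 d ≠ unitBallProj (WithLp.toLp 2 u) :=
    hproj ▸ (WithLp.toLp_injective 2).ne hne
  have hlt := norm_unitBallProj_sub_lt _ hd hne'
  gcongr
end
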